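/- arXiv:hep-th/9704090 — 2 statements merged into one kernel-verified Lean document; each statement's English description precedes it below -/
import Mathlib

section
/- (From the auxiliary linear problem to the equations of motion) Suppose τ^m(x) = ∏_{j=1}^{N} σ(x−x_j^m) for each integer m, and suppose there exist functions ρ^m(x), holomorphic and nonvanishing at all the points x_j^{m'} and x_j^{m'} ± η, satisfying the functional equation τ^{m+1}(x)ρ^m(x+η) − λ·τ^{m+1}(x+η)ρ^m(x) = τ^m(x+η)ρ^{m+1}(x) for all x and m. If the roots are in generic position (x_i^m − x_j^m ∉ {0, ±η} for i≠j and x_i^m − x_j^{m±1} ∉ {0, ±η} modulo the lattice), then the roots satisfy the discrete-time equations of motion ∏_{k=1}^{N} [σ(x_j^m−x_k^{m−1})σ(x_j^m−x_k^m+η)σ(x_j^m−x_k^{m+1}−η)] / [σ(x_j^m−x_k^{m−1}+η)σ(x_j^m−x_k^m−η)σ(x_j^m−x_k^{m+1})] = −1 for all j and m. -/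
/-!
Let `b = x_j^m`, a zero of `τ^m`. Evaluating the linear problem at level `m` in `x = b - η`, and
at level `m - 1` in `x = b` and `x = b - η`, kills one of the three terms each time and leaves three
two-term relations between `ρ^m(b)`, `ρ^m(b - η)` and `ρ^{m-1}(b)`. Eliminating these values gives
`τ^{m-1}(b) τ^m(b + η) τ^{m+1}(b - η) = -τ^{m-1}(b + η) τ^m(b - η) τ^{m+1}(b)`,
which, written out as products of sigma functions, is the equation of motion.
-/

open Complex Filter Topology

/-- The Weierstrass sigma function associated to the lattice generated by `2ω₁, 2ω₂`,
defined by its classical Weierstrass canonical product. -/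
noncomputable def wSigma (ω₁ ω₂ : ℂ) (z : ℂ) : ℂ :=
  z * ∏' p : {p : ℤ × ℤ // p ≠ 0},
    ((1 - z / (2 * (p.1.1 : ℂ) * ω₁ + 2 * (p.1.2 : ℂ) * ω₂)) *
      Complex.exp (z / (2 * (p.1.1 : ℂ) * ω₁ + 2 * (p.1.2 : ℂ) * ω₂) +
        z ^ 2 / (2 * (2 * (p.1.1 : ℂ) * ω₁ + 2 * (p.1.2 : ℂ) * ω₂) ^ 2)))

/-- The Weierstrass zeta function `ζw = σ'/σ`. -/
noncomputable def wZeta (ω₁ ω₂ : ℂ) (z : ℂ) : ℂ :=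
  deriv (wSigma ω₁ ω₂) z / wSigma ω₁ ω₂ z

theorem mul_eq_neg_mul_of_linear_problem {K : Type*} [CommRing K] [IsDomain K]
    (τ ρ : ℤ → K → K) (η lam b : K) (m : ℤ)
    (hfe : ∀ (m : ℤ) (x : K),
      τ (m + 1) x * ρ m (x + η) - lam * τ (m + 1) (x + η) * ρ m x = τ m (x + η) * ρ (m + 1) x)
    (hb : τ m b = 0) (hlam : lam ≠ 0) (hρ : ρ (m - 1) b ≠ 0) :
    τ (m - 1) b * τ m (b + η) * τ (m + 1) (b - η) =
      -(τ (m - 1) (b + η) * τ m (b - η) * τ (m + 1) b) := by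
  have hA := hfe m (b - η)
  have hB := hfe (m - 1) b
  have hC := hfe (m - 1) (b - η)
  simp only [sub_add_cancel, hb, zero_mul, mul_zero, sub_zero] at hA hB hC
  apply mul_right_cancel₀ (mul_ne_zero hlam hρ)
  linear_combination (-(τ (m - 1) b * τ (m - 1) (b + η))) * hA
    - (τ (m - 1) b * τ (m + 1) (b - η)) * hB + (lam * τ (m - 1) (b + η) * τ (m + 1) b) * hC

namespace wSigma

theorem zero (ω₁ ω₂ : ℂ) : wSigma ω₁ ω₂ 0 = 0 := by
  simp [wSigma]

/-- Reindex the canonical product by `p ↦ -p`: each factor is unchanged under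
`(z, w) ↦ (-z, -w)`. -/
theorem neg (ω₁ ω₂ z : ℂ) : wSigma ω₁ ω₂ (-z) = -wSigma ω₁ ω₂ z := by
  let latticeNeg : {p : ℤ × ℤ // p ≠ 0} ≃ {p : ℤ × ℤ // p ≠ 0} :=
    (Equiv.neg (ℤ × ℤ)).subtypeEquiv fun _ => neg_ne_zero.symm
  rw [wSigma, wSigma, ← latticeNeg.tprod_eq, neg_mul]
  congr 3 with p
  have hw : 2 * ((latticeNeg p).1.1 : ℂ) * ω₁ + 2 * ((latticeNeg p).1.2 : ℂ) * ω₂ =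
      -(2 * (p.1.1 : ℂ) * ω₁ + 2 * (p.1.2 : ℂ) * ω₂) := by
    change 2 * ((-p.1.1 : ℤ) : ℂ) * ω₁ + 2 * ((-p.1.2 : ℤ) : ℂ) * ω₂ = _
    push_cast
    ring
  simp only [hw, neg_div_neg_eq, neg_sq]

theorem sub_comm_ne_zero {ω₁ ω₂ a b : ℂ} (h : wSigma ω₁ ω₂ (a - b) ≠ 0) :
    wSigma ω₁ ω₂ (b - a) ≠ 0 := by
  rwa [← neg_sub, wSigma.neg, neg_ne_zero]

end wSigma

noncomputable def sigmaTau (ω₁ ω₂ : ℂ) {ι : Type*} [Fintype ι] (r : ι → ℂ) (x : ℂ) : ℂ :=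
  ∏ j, wSigma ω₁ ω₂ (x - r j)

section sigmaTau

variable {ω₁ ω₂ : ℂ} {ι : Type*} [Fintype ι]

theorem sigmaTau_apply_self (r : ι → ℂ) (j : ι) : sigmaTau ω₁ ω₂ r (r j) = 0 :=
  Finset.prod_eq_zero (Finset.mem_univ j) (by rw [sub_self, wSigma.zero])

theorem sigmaTau_ne_zero {r : ι → ℂ} {x : ℂ} (h : ∀ k, wSigma ω₁ ω₂ (x - r k) ≠ 0) :
    sigmaTau ω₁ ω₂ r x ≠ 0 :=
  Finset.prod_ne_zero_iff.mpr fun k _ => h k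

theorem prod_wSigma_div_eq_sigmaTau_div (η b : ℂ) (rPrev rCur rNext : ι → ℂ) :
    (∏ k, (wSigma ω₁ ω₂ (b - rPrev k) * wSigma ω₁ ω₂ (b - rCur k + η) *
          wSigma ω₁ ω₂ (b - rNext k - η)) /
        (wSigma ω₁ ω₂ (b - rPrev k + η) * wSigma ω₁ ω₂ (b - rCur k - η) *
          wSigma ω₁ ω₂ (b - rNext k))) =
      sigmaTau ω₁ ω₂ rPrev b * sigmaTau ω₁ ω₂ rCur (b + η) * sigmaTau ω₁ ω₂ rNext (b - η) /
        (sigmaTau ω₁ ω₂ rPrev (b + η) * sigmaTau ω₁ ω₂ rCur (b - η) * sigmaTau ω₁ ω₂ rNext b) := by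
  rw [Finset.prod_div_distrib]
  simp only [Finset.prod_mul_distrib, sigmaTau, add_sub_right_comm b η, sub_right_comm b η]

end sigmaTau

theorem linear_problem_implies_equations_of_motion_general (N : ℕ) (ω₁ ω₂ η lam : ℂ)
    (X : ℤ → Fin N → ℂ) (ρ : ℤ → ℂ → ℂ)
    (hlam : lam ≠ 0)
    (hgenm : ∀ (m : ℤ) (i j : Fin N), wSigma ω₁ ω₂ (X m i - X m j - η) ≠ 0)
    (hcr0 : ∀ (m : ℤ) (i j : Fin N), wSigma ω₁ ω₂ (X m i - X (m + 1) j) ≠ 0)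
    (hcrm : ∀ (m : ℤ) (i j : Fin N), wSigma ω₁ ω₂ (X m i - X (m + 1) j - η) ≠ 0)
    (hρ0 : ∀ (m m' : ℤ) (j : Fin N), ρ m (X m' j) ≠ 0)
    (hfe : ∀ (m : ℤ) (x : ℂ),
      (∏ j, wSigma ω₁ ω₂ (x - X (m + 1) j)) * ρ m (x + η) -
          lam * (∏ j, wSigma ω₁ ω₂ (x + η - X (m + 1) j)) * ρ m x =
        (∏ j, wSigma ω₁ ω₂ (x + η - X m j)) * ρ (m + 1) x) :
    ∀ (m : ℤ) (j : Fin N),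
      (∏ k, (wSigma ω₁ ω₂ (X m j - X (m - 1) k) *
              wSigma ω₁ ω₂ (X m j - X m k + η) *
              wSigma ω₁ ω₂ (X m j - X (m + 1) k - η)) /
            (wSigma ω₁ ω₂ (X m j - X (m - 1) k + η) *
              wSigma ω₁ ω₂ (X m j - X m k - η) *
              wSigma ω₁ ω₂ (X m j - X (m + 1) k))) = -1 := by
  intro m j
  have hτ := mul_eq_neg_mul_of_linear_problem (fun m => sigmaTau ω₁ ω₂ (X m)) ρ η lam (X m j) m
    hfe (sigmaTau_apply_self (X m) j) hlam (hρ0 (m - 1) m j)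
  have hden : sigmaTau ω₁ ω₂ (X (m - 1)) (X m j + η) * sigmaTau ω₁ ω₂ (X m) (X m j - η) *
      sigmaTau ω₁ ω₂ (X (m + 1)) (X m j) ≠ 0 := by
    refine mul_ne_zero (mul_ne_zero (sigmaTau_ne_zero fun k => ?_) (sigmaTau_ne_zero fun k => ?_))
      (sigmaTau_ne_zero (hcr0 m j))
    · exact wSigma.sub_comm_ne_zero (by simpa only [sub_add_cancel, sub_sub] using hcrm (m - 1) k j)
    · simpa only [sub_right_comm] using hgenm m j k
  rw [prod_wSigma_div_eq_sigmaTau_div, hτ, neg_div, div_self hden]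

/-- from the auxiliary linear problem
τ^{m+1}(x)ρ^m(x+η) − λτ^{m+1}(x+η)ρ^m(x) = τ^m(x+η)ρ^{m+1}(x),
with τ^m(x) = ∏_j σ(x − x_j^m), the roots x_j^m satisfy the discrete-time
Ruijsenaars–Schneider (Bethe-type) equations of motion. -/
theorem linear_problem_implies_equations_of_motion (N : ℕ) (ω₁ ω₂ η lam : ℂ)
    (X : ℤ → Fin N → ℂ) (ρ : ℤ → ℂ → ℂ)
    (hω : (ω₂ / ω₁).im ≠ 0) (hη : η ≠ 0) (hlam : lam ≠ 0)
    (hgen0 : ∀ (m : ℤ) (i j : Fin N), i ≠ j → wSigma ω₁ ω₂ (X m i - X m j) ≠ 0)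
    (hgenp : ∀ (m : ℤ) (i j : Fin N), wSigma ω₁ ω₂ (X m i - X m j + η) ≠ 0)
    (hgenm : ∀ (m : ℤ) (i j : Fin N), wSigma ω₁ ω₂ (X m i - X m j - η) ≠ 0)
    (hcr0 : ∀ (m : ℤ) (i j : Fin N), wSigma ω₁ ω₂ (X m i - X (m + 1) j) ≠ 0)
    (hcrp : ∀ (m : ℤ) (i j : Fin N), wSigma ω₁ ω₂ (X m i - X (m + 1) j + η) ≠ 0)
    (hcrm : ∀ (m : ℤ) (i j : Fin N), wSigma ω₁ ω₂ (X m i - X (m + 1) j - η) ≠ 0)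
    (hρ0 : ∀ (m m' : ℤ) (j : Fin N), ρ m (X m' j) ≠ 0)
    (hρp : ∀ (m m' : ℤ) (j : Fin N), ρ m (X m' j + η) ≠ 0)
    (hρm : ∀ (m m' : ℤ) (j : Fin N), ρ m (X m' j - η) ≠ 0)
    (hfe : ∀ (m : ℤ) (x : ℂ),
      (∏ j, wSigma ω₁ ω₂ (x - X (m + 1) j)) * ρ m (x + η) -
          lam * (∏ j, wSigma ω₁ ω₂ (x + η - X (m + 1) j)) * ρ m x =
        (∏ j, wSigma ω₁ ω₂ (x + η - X m j)) * ρ (m + 1) x) :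
    ∀ (m : ℤ) (j : Fin N),
      (∏ k, (wSigma ω₁ ω₂ (X m j - X (m - 1) k) *
              wSigma ω₁ ω₂ (X m j - X m k + η) *
              wSigma ω₁ ω₂ (X m j - X (m + 1) k - η)) /
            (wSigma ω₁ ω₂ (X m j - X (m - 1) k + η) *
              wSigma ω₁ ω₂ (X m j - X m k - η) *
              wSigma ω₁ ω₂ (X m j - X (m + 1) k))) = -1 :=
  linear_problem_implies_equations_of_motion_general N ω₁ ω₂ η lam X ρ hlam hgenm hcr0 hcrm hρ0 hfe
end

section
/- (Discrete zero curvature from Hirota's equation) Let τ : ℤ³ → ℂ∖{0} satisfy the Hirota bilinear equation λ₂₃·τ(l₁+1,l₂,l₃)τ(l₁,l₂+1,l₃+1) − λ₁₃·τ(l₁,l₂+1,l₃)τ(l₁+1,l₂,l₃+1) + λ₁₂·τ(l₁,l₂,l₃+1)τ(l₁+1,l₂+1,l₃) = 0 with λ's nonzero. For α = 2,3 define operators on functions ψ : ℤ³ → ℂ by (M̂^{(α)}ψ)(l) = ψ(l₁+1, l_α−1) − λ_{1α}·[τ(l₁,l_α−1)τ(l₁+1,l_α)/(τ(l₁,l_α)τ(l₁+1,l_α−1))]·ψ(l₁,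 l_α−1) (shifting only the indicated arguments). Then M̂^{(2)} and M̂^{(3)} commute: M̂^{(2)}M̂^{(3)}ψ = M̂^{(3)}M̂^{(2)}ψ for all ψ and all l ∈ ℤ³. -/
open Complex

/-- The operator M̂^{(2)} = e^{−∂_{l₂}}M^{(2)} of the auxiliary linear problem,
shifting l₁ and l₂ only. -/
noncomputable def Mhat2 (lam12 : ℂ) (τ ψ : ℤ → ℤ → ℤ → ℂ) (l₁ l₂ l₃ : ℤ) : ℂ :=
  ψ (l₁ + 1) (l₂ - 1) l₃ -
    lam12 * (τ l₁ (l₂ - 1) l₃ * τ (l₁ + 1) l₂ l₃) /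
      (τ l₁ l₂ l₃ * τ (l₁ + 1) (l₂ - 1) l₃) * ψ l₁ (l₂ - 1) l₃

/-- The operator M̂^{(3)} = e^{−∂_{l₃}}M^{(3)} of the auxiliary linear problem,
shifting l₁ and l₃ only. -/
noncomputable def Mhat3 (lam13 : ℂ) (τ ψ : ℤ → ℤ → ℤ → ℂ) (l₁ l₂ l₃ : ℤ) : ℂ :=
  ψ (l₁ + 1) l₂ (l₃ - 1) -
    lam13 * (τ l₁ l₂ (l₃ - 1) * τ (l₁ + 1) l₂ l₃) /
      (τ l₁ l₂ l₃ * τ (l₁ + 1) l₂ (l₃ - 1)) * ψ l₁ l₂ (l₃ - 1)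

/-!
Both `M̂⁽²⁾M̂⁽³⁾ψ` and `M̂⁽³⁾M̂⁽²⁾ψ` are combinations of `ψ` at `(l₁ + k, l₂ - 1, l₃ - 1)`,
`k = 0, 1, 2`, with leading coefficient `1`. Writing `c₂, c₃` for the gauge coefficients of
`M̂⁽²⁾, M̂⁽³⁾`, the constant coefficients `c₂ c₃` agree because the τ-factors telescope. The middle
ones agree because the Hirota equation on the cubes with lowest corner `(l₁, l₂ - 1, l₃ - 1)` and
`(l₁ + 1, l₂ - 1, l₃ - 1)` expresses both differences `c₂ - c₃` that occur as `-λ₂₃` times the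
cross ratio of τ on the `(l₂, l₃)`-face with top corner `(l₁ + 1, l₂, l₃)`.
-/

namespace DiscreteKP

variable {K : Type*} [Field K]

def IsHirota (lam12 lam13 lam23 : K) (τ : ℤ → ℤ → ℤ → K) : Prop :=
  ∀ l₁ l₂ l₃ : ℤ,
    lam23 * (τ (l₁ + 1) l₂ l₃ * τ l₁ (l₂ + 1) (l₃ + 1)) -
      lam13 * (τ l₁ (l₂ + 1) l₃ * τ (l₁ + 1) l₂ (l₃ + 1)) +
      lam12 * (τ l₁ l₂ (l₃ + 1) * τ (l₁ + 1) (l₂ + 1) l₃) = 0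

def coeff2 (lam12 : K) (τ : ℤ → ℤ → ℤ → K) (l₁ l₂ l₃ : ℤ) : K :=
  lam12 * (τ l₁ (l₂ - 1) l₃ * τ (l₁ + 1) l₂ l₃) / (τ l₁ l₂ l₃ * τ (l₁ + 1) (l₂ - 1) l₃)

def coeff3 (lam13 : K) (τ : ℤ → ℤ → ℤ → K) (l₁ l₂ l₃ : ℤ) : K :=
  lam13 * (τ l₁ l₂ (l₃ - 1) * τ (l₁ + 1) l₂ l₃) / (τ l₁ l₂ l₃ * τ (l₁ + 1) l₂ (l₃ - 1))

def crossRatio23 (τ : ℤ → ℤ → ℤ → K) (l₁ l₂ l₃ : ℤ) : K :=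
  τ l₁ l₂ l₃ * τ l₁ (l₂ - 1) (l₃ - 1) / (τ l₁ (l₂ - 1) l₃ * τ l₁ l₂ (l₃ - 1))

section

variable {lam12 lam13 lam23 : K} {τ : ℤ → ℤ → ℤ → K}

theorem coeff2_sub_coeff3 (hτ : ∀ l₁ l₂ l₃, τ l₁ l₂ l₃ ≠ 0)
    (hH : IsHirota lam12 lam13 lam23 τ) (l₁ l₂ l₃ : ℤ) :
    coeff2 lam12 τ l₁ l₂ l₃ - coeff3 lam13 τ l₁ l₂ l₃ =
      -lam23 * crossRatio23 τ (l₁ + 1) l₂ l₃ := by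
  have H := hH l₁ (l₂ - 1) (l₃ - 1)
  simp only [sub_add_cancel] at H
  unfold coeff2 coeff3 crossRatio23
  field_simp [hτ]
  linear_combination H

theorem coeff2_sub_coeff3_shift (hτ : ∀ l₁ l₂ l₃, τ l₁ l₂ l₃ ≠ 0)
    (hH : IsHirota lam12 lam13 lam23 τ) (l₁ l₂ l₃ : ℤ) :
    coeff2 lam12 τ l₁ l₂ (l₃ - 1) - coeff3 lam13 τ l₁ (l₂ - 1) l₃ =
      -lam23 * crossRatio23 τ l₁ l₂ l₃ := by
  have H := hH l₁ (l₂ - 1) (l₃ - 1)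
  simp only [sub_add_cancel] at H
  unfold coeff2 coeff3 crossRatio23
  field_simp [hτ]
  linear_combination H

theorem coeff2_mul_coeff3 (hτ : ∀ l₁ l₂ l₃, τ l₁ l₂ l₃ ≠ 0) (l₁ l₂ l₃ : ℤ) :
    coeff2 lam12 τ l₁ l₂ l₃ * coeff3 lam13 τ l₁ (l₂ - 1) l₃ =
      coeff3 lam13 τ l₁ l₂ l₃ * coeff2 lam12 τ l₁ l₂ (l₃ - 1) := by
  unfold coeff2 coeff3
  field_simp [hτ]

theorem coeff3_add_coeff2 (hτ : ∀ l₁ l₂ l₃, τ l₁ l₂ l₃ ≠ 0)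
    (hH : IsHirota lam12 lam13 lam23 τ) (l₁ l₂ l₃ : ℤ) :
    coeff3 lam13 τ (l₁ + 1) (l₂ - 1) l₃ + coeff2 lam12 τ l₁ l₂ l₃ =
      coeff2 lam12 τ (l₁ + 1) l₂ (l₃ - 1) + coeff3 lam13 τ l₁ l₂ l₃ := by
  linear_combination coeff2_sub_coeff3 hτ hH l₁ l₂ l₃ -
    coeff2_sub_coeff3_shift hτ hH (l₁ + 1) l₂ l₃

end

theorem Mhat2_apply (lam12 : ℂ) (τ ψ : ℤ → ℤ → ℤ → ℂ) (l₁ l₂ l₃ : ℤ) :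
    Mhat2 lam12 τ ψ l₁ l₂ l₃ =
      ψ (l₁ + 1) (l₂ - 1) l₃ - coeff2 lam12 τ l₁ l₂ l₃ * ψ l₁ (l₂ - 1) l₃ :=
  rfl

theorem Mhat3_apply (lam13 : ℂ) (τ ψ : ℤ → ℤ → ℤ → ℂ) (l₁ l₂ l₃ : ℤ) :
    Mhat3 lam13 τ ψ l₁ l₂ l₃ =
      ψ (l₁ + 1) l₂ (l₃ - 1) - coeff3 lam13 τ l₁ l₂ l₃ * ψ l₁ l₂ (l₃ - 1) :=
  rfl

end DiscreteKP

open DiscreteKP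

theorem discrete_zero_curvature_general (lam12 lam13 lam23 : ℂ)
    (τ : ℤ → ℤ → ℤ → ℂ) (hτ : ∀ l₁ l₂ l₃, τ l₁ l₂ l₃ ≠ 0)
    (hHirota : ∀ l₁ l₂ l₃ : ℤ,
      lam23 * (τ (l₁ + 1) l₂ l₃ * τ l₁ (l₂ + 1) (l₃ + 1)) -
        lam13 * (τ l₁ (l₂ + 1) l₃ * τ (l₁ + 1) l₂ (l₃ + 1)) +
        lam12 * (τ l₁ l₂ (l₃ + 1) * τ (l₁ + 1) (l₂ + 1) l₃) = 0) :
    ∀ (ψ : ℤ → ℤ → ℤ → ℂ) (l₁ l₂ l₃ : ℤ),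
      Mhat2 lam12 τ (Mhat3 lam13 τ ψ) l₁ l₂ l₃ =
        Mhat3 lam13 τ (Mhat2 lam12 τ ψ) l₁ l₂ l₃ := by
  intro ψ l₁ l₂ l₃
  simp only [Mhat2_apply, Mhat3_apply]
  linear_combination ψ l₁ (l₂ - 1) (l₃ - 1) * coeff2_mul_coeff3 hτ l₁ l₂ l₃ -
    ψ (l₁ + 1) (l₂ - 1) (l₃ - 1) * coeff3_add_coeff2 hτ hHirota l₁ l₂ l₃

/-- discrete zero curvature from Hirota's equation: if a nowhere
vanishing τ satisfies the Hirota bilinear equation, then the operators M̂^{(2)}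
and M̂^{(3)} commute. -/
theorem discrete_zero_curvature (lam12 lam13 lam23 : ℂ)
    (h12 : lam12 ≠ 0) (h13 : lam13 ≠ 0) (h23 : lam23 ≠ 0)
    (τ : ℤ → ℤ → ℤ → ℂ) (hτ : ∀ l₁ l₂ l₃, τ l₁ l₂ l₃ ≠ 0)
    (hHirota : ∀ l₁ l₂ l₃ : ℤ,
      lam23 * (τ (l₁ + 1) l₂ l₃ * τ l₁ (l₂ + 1) (l₃ + 1)) -
        lam13 * (τ l₁ (l₂ + 1) l₃ * τ (l₁ + 1) l₂ (l₃ + 1)) +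
        lam12 * (τ l₁ l₂ (l₃ + 1) * τ (l₁ + 1) (l₂ + 1) l₃) = 0) :
    ∀ (ψ : ℤ → ℤ → ℤ → ℂ) (l₁ l₂ l₃ : ℤ),
      Mhat2 lam12 τ (Mhat3 lam13 τ ψ) l₁ l₂ l₃ =
        Mhat3 lam13 τ (Mhat2 lam12 τ ψ) l₁ l₂ l₃ :=
  discrete_zero_curvature_general lam12 lam13 lam23 τ hτ hHirota
end
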